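/- (Gaussian slab estimate.) Let d ≥ 2, v ∈ ℝ^d with v ≠ 0, γ = 3/|v|, b > 0, and let ℓ' be a unit vector with (v/|v|)·ℓ' > 2/3. Set V_{ℓ',b,L} = {x ∈ ℝ^d : −bL < x·ℓ' < L, |Π_{ℓ'}(x)| < L²}. Then: (i) every y ∈ V_{ℓ',b,L} satisfies |y − γLv| ≥ L(3(v/|v|)·ℓ' − 1) > L; and (ii) for every c₂ > 0 there is a constant c depending only on b, d, c₂, |v| such that for all L ≥ 1: c₂ (γL)^{−d/2} ∫_{V_{ℓ',b,L}} exp(−|y − γLv|²/(c₂ γ L)) dy ≤ c L^{3d/2 − 1} exp(−L/(c₂ γ)). -/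

import Mathlib

/-! Projecting onto `ℓ'`: the vector `γ L v − y` has `ℓ'`-component at least
`3 L (v/|v|)·ℓ' − L > L`, which is (i). Hence on `V_{ℓ',b,L}` the Gaussian is at most
`exp(−L/(c₂γ))`, while in an orthonormal frame whose first vector is `ℓ'` the set lies in a
box of volume `(1+b) L (2L²)^{d−1}`; with the prefactor `(γL)^{−d/2}` the powers of `L` add
up to `3d/2 − 1`. -/

open MeasureTheory Set
open scoped RealInnerProductSpace

noncomputable section

abbrev EucSp (d : ℕ) : Type := EuclideanSpace ℝ (Fin d)

/-- the bounded approximation `V_{ℓ',b,L}` of the slab, with cylinder radius `ρ`. -/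
def cyl {d : ℕ} (ℓ' : EucSp d) (b L ρ : ℝ) : Set (EucSp d) :=
  {x | -(b * L) < ⟪x, ℓ'⟫ ∧ ⟪x, ℓ'⟫ < L ∧ ‖x - ⟪x, ℓ'⟫ • ℓ'‖ < ρ}

open Real

section InnerProductSpace

variable {E : Type*} [NormedAddCommGroup E] [InnerProductSpace ℝ E]

theorem mul_sub_one_le_norm_sub_smul {ℓ : E} (hℓ : ‖ℓ‖ = 1) (u : E) {y : E} {L : ℝ}
    (hy : ⟪y, ℓ⟫ ≤ L) (t : ℝ) : L * (t * ⟪u, ℓ⟫ - 1) ≤ ‖y - (t * L) • u‖ := by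
  have h := real_inner_le_norm ((t * L) • u - y) ℓ
  rw [hℓ, mul_one, norm_sub_rev, inner_sub_left, real_inner_smul_left] at h
  linarith

theorem norm_sub_smul_lower_bound {v ℓ y : E} (hℓ : ‖ℓ‖ = 1)
    (hα : 2 / 3 < ⟪‖v‖⁻¹ • v, ℓ⟫) {L : ℝ} (hL : 0 < L) (hy : ⟪y, ℓ⟫ ≤ L) :
    L * (3 * ⟪‖v‖⁻¹ • v, ℓ⟫ - 1) ≤ ‖y - (3 / ‖v‖ * L) • v‖ ∧
      L < ‖y - (3 / ‖v‖ * L) • v‖ := by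
  have h := mul_sub_one_le_norm_sub_smul hℓ (‖v‖⁻¹ • v) hy 3
  rw [smul_smul, show 3 * L * ‖v‖⁻¹ = 3 / ‖v‖ * L by ring] at h
  exact ⟨h, by nlinarith⟩

theorem OrthonormalBasis.abs_repr_apply_le {ι : Type*} [Fintype ι] (B : OrthonormalBasis ι ℝ E)
    {i i₀ : ι} (hi : i ≠ i₀) (x : E) : |B.repr x i| ≤ ‖x - ⟪x, B i₀⟫ • B i₀‖ := by
  have h := abs_real_inner_le_norm (B i) (x - ⟪x, B i₀⟫ • B i₀)
  rwa [B.norm_eq_one, one_mul, inner_sub_right, real_inner_smul_right,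
    B.orthonormal.inner_eq_zero hi, mul_zero, sub_zero, ← B.repr_apply_apply] at h

theorem exists_orthonormalBasis_apply_eq {ι : Type*} [Fintype ι] [FiniteDimensional ℝ E]
    (hcard : Module.finrank ℝ E = Fintype.card ι) {ℓ : E} (hℓ : ‖ℓ‖ = 1) (i₀ : ι) :
    ∃ B : OrthonormalBasis ι ℝ E, B i₀ = ℓ := by
  have horth : Orthonormal ℝ (({i₀} : Set ι).domRestrict fun _ => ℓ) :=
    ⟨fun _ => hℓ, fun i j hij => absurd (Subsingleton.elim i j) hij⟩
  obtain ⟨B, hB⟩ := horth.exists_orthonormalBasis_extension_of_card_eq hcard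
  exact ⟨B, hB i₀ rfl⟩

end InnerProductSpace

theorem exp_neg_sq_div_mul_le {r s L : ℝ} (hs : 0 < s) (hL : 0 < L) (hr : L ≤ r) :
    exp (-r ^ 2 / (s * L)) ≤ exp (-L / s) := by
  rw [exp_le_exp, show -L / s = -L ^ 2 / (s * L) by field_simp]
  gcongr

theorem setIntegral_le_mul_of_norm_le {X : Type*} [MeasurableSpace X] {μ : Measure X}
    {s : Set X} {f : X → ℝ} {C M : ℝ} (hC : 0 ≤ C) (hM : 0 ≤ M)
    (hμ : μ s ≤ ENNReal.ofReal M) (hf : ∀ x ∈ s, ‖f x‖ ≤ C) :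
    ∫ x in s, f x ∂μ ≤ C * M :=
  calc ∫ x in s, f x ∂μ ≤ ‖∫ x in s, f x ∂μ‖ := le_abs_self _
    _ ≤ C * μ.real s :=
      norm_setIntegral_le_of_norm_le_const (hμ.trans_lt ENNReal.ofReal_lt_top) hf
    _ ≤ C * M := by gcongr; exact ENNReal.toReal_le_of_le_ofReal hM hμ

theorem rpow_neg_div_two_mul_mul_sq_pow {L : ℝ} (hL : 0 < L) {d : ℕ} (hd : 0 < d) :
    L ^ (-(d : ℝ) / 2) * (L * (L ^ 2) ^ (d - 1)) = L ^ (3 * (d : ℝ) / 2 - 1) := by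
  have h : L * (L ^ 2) ^ (d - 1) = L ^ ((2 * d - 1 : ℕ) : ℝ) := by
    rw [rpow_natCast, ← pow_mul, ← pow_succ']
    congr 1
    omega
  rw [h, ← rpow_add hL, Nat.cast_sub (by omega)]
  push_cast
  ring_nf

theorem EucSp.pos_of_norm_eq_one {d : ℕ} {ℓ : EucSp d} (hℓ : ‖ℓ‖ = 1) : 0 < d := by
  rcases Nat.eq_zero_or_pos d with rfl | hd
  · simp [Subsingleton.elim ℓ 0] at hℓ
  · exact hd

theorem volume_cyl_le {d : ℕ} {ℓ : EucSp d} (hℓ : ‖ℓ‖ = 1) (b L : ℝ) {ρ : ℝ} (hρ : 0 ≤ ρ) :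
    volume (cyl ℓ b L ρ) ≤ ENNReal.ofReal ((1 + b) * L * (2 * ρ) ^ (d - 1)) := by
  obtain ⟨i₀⟩ : Nonempty (Fin d) := ⟨⟨0, EucSp.pos_of_norm_eq_one hℓ⟩⟩
  obtain ⟨B, rfl⟩ := exists_orthonormalBasis_apply_eq (by simp) hℓ i₀
  let lower : Fin d → ℝ := Function.update (fun _ => -ρ) i₀ (-(b * L))
  let upper : Fin d → ℝ := Function.update (fun _ => ρ) i₀ L
  have hsub : cyl (B i₀) b L ρ ⊆ (fun x => (B.repr x).ofLp) ⁻¹' Icc lower upper := by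
    rintro x ⟨hxlo, hxhi, hxρ⟩
    have hcoord : ∀ i, lower i ≤ B.repr x i ∧ B.repr x i ≤ upper i := by
      intro i
      by_cases hi₀ : i = i₀
      · simp only [hi₀, lower, upper, Function.update_self, B.repr_apply_apply, real_inner_comm]
        exact ⟨hxlo.le, hxhi.le⟩
      · simp only [lower, upper, Function.update_of_ne hi₀]
        exact abs_le.mp ((B.abs_repr_apply_le hi₀ x).trans hxρ.le)
    exact ⟨fun i => (hcoord i).1, fun i => (hcoord i).2⟩
  have hrepr : MeasurePreserving (fun x => (B.repr x).ofLp) :=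
    (PiLp.volume_preserving_ofLp _).comp B.measurePreserving_repr
  have hlen : ∀ i ≠ i₀, upper i - lower i = 2 * ρ := fun i h => by
    simp only [lower, upper, Function.update_of_ne h]; ring
  calc volume (cyl (B i₀) b L ρ) ≤ volume ((fun x => (B.repr x).ofLp) ⁻¹' Icc lower upper) :=
        measure_mono hsub
    _ = volume (Icc lower upper) := hrepr.measure_preimage measurableSet_Icc.nullMeasurableSet
    _ = ∏ i, ENNReal.ofReal (upper i - lower i) := Real.volume_Icc_pi
    _ = ENNReal.ofReal ((1 + b) * L) * ENNReal.ofReal (2 * ρ) ^ (d - 1) := by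
        rw [Fintype.prod_eq_mul_prod_compl i₀, Finset.prod_congr rfl fun i hmem =>
          congrArg ENNReal.ofReal (hlen i (Finset.mem_compl.mp hmem ∘ Finset.mem_singleton.mpr)),
          Finset.prod_const, Finset.card_compl, Finset.card_singleton, Fintype.card_fin]
        simp only [lower, upper, Function.update_self]
        congr 2
        ring
    _ = ENNReal.ofReal ((1 + b) * L * (2 * ρ) ^ (d - 1)) := by
        rw [← ENNReal.ofReal_pow (by positivity)]
        exact (ENNReal.ofReal_mul' (by positivity)).symm

theorem gaussian_slab_estimate_general (d : ℕ) (v : EucSp d) (hv : v ≠ 0)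
    (b : ℝ) (hb : 0 < b) :
    -- (i)
    (∀ ℓ' : EucSp d, ‖ℓ'‖ = 1 → 2 / 3 < ⟪‖v‖⁻¹ • v, ℓ'⟫ →
      ∀ L > (0:ℝ), ∀ y ∈ cyl ℓ' b L (L ^ 2),
        L * (3 * ⟪‖v‖⁻¹ • v, ℓ'⟫ - 1) ≤ ‖y - (3 / ‖v‖ * L) • v‖ ∧
        L < ‖y - (3 / ‖v‖ * L) • v‖) ∧
    -- (ii)
    (∀ c₂ > (0:ℝ), ∃ c > (0:ℝ),
      ∀ ℓ' : EucSp d, ‖ℓ'‖ = 1 → 2 / 3 < ⟪‖v‖⁻¹ • v, ℓ'⟫ →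
      ∀ L ≥ (1:ℝ),
        c₂ * (3 / ‖v‖ * L) ^ (-(d : ℝ) / 2) *
            ∫ y in cyl ℓ' b L (L ^ 2),
              Real.exp (-‖y - (3 / ‖v‖ * L) • v‖ ^ 2 / (c₂ * (3 / ‖v‖) * L)) ≤
          c * L ^ (3 * (d : ℝ) / 2 - 1) * Real.exp (-L / (c₂ * (3 / ‖v‖)))) := by
  refine ⟨fun ℓ' hℓ hα L hL y hy => norm_sub_smul_lower_bound hℓ hα hL hy.2.1.le,
    fun c₂ hc₂ => ?_⟩
  have hγ : 0 < 3 / ‖v‖ := by positivity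
  refine ⟨c₂ * (3 / ‖v‖) ^ (-(d : ℝ) / 2) * (1 + b) * 2 ^ (d - 1), by positivity,
    fun ℓ' hℓ hα L hL => ?_⟩
  have hL₀ : 0 < L := by linarith
  have hint : ∫ y in cyl ℓ' b L (L ^ 2),
      exp (-‖y - (3 / ‖v‖ * L) • v‖ ^ 2 / (c₂ * (3 / ‖v‖) * L)) ≤
        exp (-L / (c₂ * (3 / ‖v‖))) * ((1 + b) * L * (2 * L ^ 2) ^ (d - 1)) := by
    refine setIntegral_le_mul_of_norm_le (exp_pos _).le (by positivity)
      (volume_cyl_le hℓ b L (sq_nonneg L)) fun y hy => ?_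
    rw [norm_of_nonneg (exp_pos _).le]
    exact exp_neg_sq_div_mul_le (by positivity) hL₀
      (norm_sub_smul_lower_bound hℓ hα hL₀ hy.2.1.le).2.le
  calc c₂ * (3 / ‖v‖ * L) ^ (-(d : ℝ) / 2) * ∫ y in cyl ℓ' b L (L ^ 2),
        exp (-‖y - (3 / ‖v‖ * L) • v‖ ^ 2 / (c₂ * (3 / ‖v‖) * L))
      ≤ c₂ * (3 / ‖v‖ * L) ^ (-(d : ℝ) / 2) *
          (exp (-L / (c₂ * (3 / ‖v‖))) * ((1 + b) * L * (2 * L ^ 2) ^ (d - 1))) := by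
        gcongr
    _ = c₂ * (3 / ‖v‖) ^ (-(d : ℝ) / 2) * (1 + b) * 2 ^ (d - 1) *
          (L ^ (-(d : ℝ) / 2) * (L * (L ^ 2) ^ (d - 1))) * exp (-L / (c₂ * (3 / ‖v‖))) := by
        rw [mul_rpow hγ.le hL₀.le, mul_pow]
        ring
    _ = _ := by rw [rpow_neg_div_two_mul_mul_sq_pow hL₀ (EucSp.pos_of_norm_eq_one hℓ)]

theorem gaussian_slab_estimate (d : ℕ) (hd : 2 ≤ d) (v : EucSp d) (hv : v ≠ 0)
    (b : ℝ) (hb : 0 < b) :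
    -- (i)
    (∀ ℓ' : EucSp d, ‖ℓ'‖ = 1 → 2 / 3 < ⟪‖v‖⁻¹ • v, ℓ'⟫ →
      ∀ L > (0:ℝ), ∀ y ∈ cyl ℓ' b L (L ^ 2),
        L * (3 * ⟪‖v‖⁻¹ • v, ℓ'⟫ - 1) ≤ ‖y - (3 / ‖v‖ * L) • v‖ ∧
        L < ‖y - (3 / ‖v‖ * L) • v‖) ∧
    -- (ii)
    (∀ c₂ > (0:ℝ), ∃ c > (0:ℝ),
      ∀ ℓ' : EucSp d, ‖ℓ'‖ = 1 → 2 / 3 < ⟪‖v‖⁻¹ • v, ℓ'⟫ →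
      ∀ L ≥ (1:ℝ),
        c₂ * (3 / ‖v‖ * L) ^ (-(d : ℝ) / 2) *
            ∫ y in cyl ℓ' b L (L ^ 2),
              Real.exp (-‖y - (3 / ‖v‖ * L) • v‖ ^ 2 / (c₂ * (3 / ‖v‖) * L)) ≤
          c * L ^ (3 * (d : ℝ) / 2 - 1) * Real.exp (-L / (c₂ * (3 / ‖v‖)))) :=
  gaussian_slab_estimate_general d v hv b hb

end
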